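/- arXiv:1702.03201 — 2 statements merged into one kernel-verified Lean document; each statement's English description precedes it below -/
import Mathlib

section
/- Let J be an at most countable index set, Λ = J × J, and let A be the operator acting on sequences a = (a_{μ_1,μ_2}) on Λ by (Aa)_{λ_1,λ_2} = Σ_{μ_1,μ_2 ∈ J} K_{λ_1,λ_2,μ_1,μ_2} a_{μ_1,μ_2}. If K ∘ c̃_3 ∈ ℓ^{1,∞,1,∞}(J×J×J×J), then A is bounded on ℓ^{∞,1}(Λ) with ‖A‖_{ℓ^{∞,1} → ℓ^{∞,1}} ≤ ‖K ∘ c̃_3‖_{ℓ^{1,∞,1,∞}}. -/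
noncomputable section

open scoped ENNReal

lemma enorm_tsum_le' {ι : Type*} (f : ι → ℂ) :
    (‖∑' i, f i‖₊ : ℝ≥0∞) ≤ ∑' i, (‖f i‖₊ : ℝ≥0∞) := by
  by_cases h : Summable fun i => ‖f i‖₊
  · exact le_trans (ENNReal.coe_le_coe.2 (nnnorm_tsum_le h)) (ENNReal.coe_tsum h).le
  · have : (∑' i, (‖f i‖₊ : ℝ≥0∞)) = ∞ := by
      by_contra h'
      exact h (ENNReal.tsum_coe_ne_top_iff_summable.1 h')
    simp [this]

/-- **Schur-type boundedness on `ℓ^{∞,1}`** (Proposition 4.1 (i) of the paper).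
Let `J` be an at most countable index set and `A` the operator on sequences on `Λ = J × J`
given by `(Aa)_{λ₁,λ₂} = Σ_{μ₁,μ₂} K_{λ₁,λ₂,μ₁,μ₂} a_{μ₁,μ₂}`.
If `K ∘ c̃₃ ∈ ℓ^{1,∞,1,∞}(J⁴)`, where `c̃₃(x₁,x₂,x₃,x₄) = (x₂,x₃,x₁,x₄)` (so that
`(K ∘ c̃₃)_{j₁,j₂,j₃,j₄} = K_{j₂,j₃,j₁,j₄}`), then `A` is bounded on `ℓ^{∞,1}(Λ)` with
`‖A‖_{ℓ^{∞,1} → ℓ^{∞,1}} ≤ ‖K ∘ c̃₃‖_{ℓ^{1,∞,1,∞}}`.  (Here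
`‖a‖_{ℓ^{∞,1}} = Σ_{λ₂} sup_{λ₁} |a_{λ₁,λ₂}|` and
`‖b‖_{ℓ^{1,∞,1,∞}} = sup_{j₄} Σ_{j₃} sup_{j₂} Σ_{j₁} |b_{j₁,j₂,j₃,j₄}|`.) -/
theorem schur_linfty_l1
    {J : Type*} [Countable J] (K : J → J → J → J → ℂ)
    (hK : (⨆ j4 : J, ∑' j3 : J, ⨆ j2 : J, ∑' j1 : J, (‖K j2 j3 j1 j4‖₊ : ℝ≥0∞)) ≠ ∞) :
    ∀ a : J → J → ℂ,
      (∑' l2 : J, ⨆ l1 : J,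
          (‖∑' m : J × J, K l1 l2 m.1 m.2 * a m.1 m.2‖₊ : ℝ≥0∞)) ≤
        (⨆ j4 : J, ∑' j3 : J, ⨆ j2 : J, ∑' j1 : J, (‖K j2 j3 j1 j4‖₊ : ℝ≥0∞)) *
          (∑' l2 : J, ⨆ l1 : J, (‖a l1 l2‖₊ : ℝ≥0∞)) := by
  intro a
  calc ∑' l2 : J, ⨆ l1 : J, (‖∑' m : J × J, K l1 l2 m.1 m.2 * a m.1 m.2‖₊ : ℝ≥0∞)
      ≤ ∑' l2 : J, ⨆ l1 : J, ∑' m2 : J, (∑' m1 : J, (‖K l1 l2 m1 m2‖₊ : ℝ≥0∞)) * (⨆ m1 : J, (‖a m1 m2‖₊ : ℝ≥0∞)) := by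
        refine ENNReal.tsum_le_tsum fun l2 => iSup_mono fun l1 => ?_
        refine le_trans (enorm_tsum_le' _) ?_
        rw [ENNReal.tsum_prod', ENNReal.tsum_comm]
        refine ENNReal.tsum_le_tsum fun m2 => ?_
        rw [← ENNReal.tsum_mul_right]
        refine ENNReal.tsum_le_tsum fun m1 => ?_
        calc (‖K l1 l2 m1 m2 * a m1 m2‖₊ : ℝ≥0∞)
            = (‖K l1 l2 m1 m2‖₊ : ℝ≥0∞) * (‖a m1 m2‖₊ : ℝ≥0∞) := by
              rw [nnnorm_mul, ENNReal.coe_mul]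
          _ ≤ (‖K l1 l2 m1 m2‖₊ : ℝ≥0∞) * (⨆ m1 : J, (‖a m1 m2‖₊ : ℝ≥0∞)) := mul_le_mul_right (le_iSup (fun μ : J => (‖a μ m2‖₊ : ℝ≥0∞)) m1) _
    _ ≤ ∑' l2 : J, ∑' m2 : J, (⨆ l1 : J, ∑' m1 : J, (‖K l1 l2 m1 m2‖₊ : ℝ≥0∞)) * (⨆ m1 : J, (‖a m1 m2‖₊ : ℝ≥0∞)) := by
        exact ENNReal.tsum_le_tsum fun l2 => iSup_le fun l1 =>
          ENNReal.tsum_le_tsum fun m2 => mul_le_mul_left (le_iSup (fun l1 : J => ∑' m1 : J, (‖K l1 l2 m1 m2‖₊ : ℝ≥0∞)) l1) _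
    _ = ∑' m2 : J, (∑' l2 : J, ⨆ l1 : J, ∑' m1 : J, (‖K l1 l2 m1 m2‖₊ : ℝ≥0∞)) * (⨆ m1 : J, (‖a m1 m2‖₊ : ℝ≥0∞)) := by
        rw [ENNReal.tsum_comm]
        exact tsum_congr fun m2 => ENNReal.tsum_mul_right
    _ ≤ ∑' m2 : J, (⨆ j4 : J, ∑' j3 : J, ⨆ j2 : J, ∑' j1 : J, (‖K j2 j3 j1 j4‖₊ : ℝ≥0∞)) *
          (⨆ m1 : J, (‖a m1 m2‖₊ : ℝ≥0∞)) := ENNReal.tsum_le_tsum fun m2 =>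
        mul_le_mul_left
          (le_iSup (fun j4 => ∑' j3 : J, ⨆ j2 : J, ∑' j1 : J, (‖K j2 j3 j1 j4‖₊ : ℝ≥0∞)) m2) _
    _ = (⨆ j4 : J, ∑' j3 : J, ⨆ j2 : J, ∑' j1 : J, (‖K j2 j3 j1 j4‖₊ : ℝ≥0∞)) *
          (∑' m2 : J, ⨆ m1 : J, (‖a m1 m2‖₊ : ℝ≥0∞)) := ENNReal.tsum_mul_left

end
end

section
/- Let N ∈ ℕ, J = {0,1,…,N−1}, and define K_{λ_1,λ_2,μ_1,μ_2} = F_{λ_2,μ_1} = N^{−1/2} e^{−2πi λ_2 μ_1 / N} (the Fourier matrix entries). Then ‖K ∘ c̃_3‖_{ℓ^{1,∞,1,∞}} = ‖F‖_{ℓ^1} = N^{3/2}, while the operator A on sequences on J × J defined by (Aa)_{λ_1,λ_2} = Σ_{μ_1,μ_2} K_{λ_1,λ_2,μ_1,μ_2} a_{μ_1,μ_2} satisfies ‖A‖_{ℓ^{∞,1} → ℓ^{∞,1}} ≤ N. Consequently there is no constant C independent of the kernel such that ‖K ∘ c̃_3‖_{ℓ^{1,∞,1,∞}} ≤ C‖A‖_{ℓ^{∞,1}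 → ℓ^{∞,1}} for all kernels. -/
/-!
The kernel `K_{λ₁,λ₂,μ₁,μ₂} = F_{λ₂,μ₁}` ignores `λ₁` and `μ₂`, so `‖K ∘ c̃₃‖_{ℓ^{1,∞,1,∞}}` is
just `‖F‖_{ℓ¹} = N² · N^{-1/2}`, all entries of `F` having modulus `N^{-1/2}`. The operator `A`,
on the other hand, first sums `a` over `μ₂`, which gives a vector bounded in `ℓ^∞` by
`‖a‖_{ℓ^{∞,1}}`, and then applies `F`. Since `F` is unitary, Cauchy–Schwarz and Parseval bound
`F : ℓ^∞ → ℓ¹` by `√N · √N = N`. The ratio of the two quantities is `√N`, which is unbounded.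
-/

noncomputable section

open scoped ENNReal

/-- The `N × N` discrete Fourier matrix `F_{j,k} = N^{-1/2} e^{-2πi jk / N}`. -/
def Fmat (N : ℕ) : Fin N → Fin N → ℂ := fun j k =>
  Complex.exp (-(2 * Real.pi) * Complex.I * ((j.1 : ℂ) * (k.1 : ℂ)) / (N : ℂ)) /
    ((Real.sqrt N : ℝ) : ℂ)

/-- The kernel `K_{λ₁,λ₂,μ₁,μ₂} = F_{λ₂,μ₁}` built from the Fourier matrix. -/
def Kmat (N : ℕ) : Fin N → Fin N → Fin N → Fin N → ℂ := fun _ l2 m1 _ => Fmat N l2 m1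

open scoped Matrix

theorem IsPrimitiveRoot.sum_zpow_pow_fin {K : Type*} [Field K] {ζ : K} {N : ℕ}
    (hζ : IsPrimitiveRoot ζ N) (d : ℤ) :
    ∑ l : Fin N, (ζ ^ d) ^ (l : ℕ) = if (N : ℤ) ∣ d then (N : K) else 0 := by
  rw [Fin.sum_univ_eq_sum_range (fun l => (ζ ^ d) ^ l)]
  split_ifs with hd
  · simp [(hζ.zpow_eq_one_iff_dvd d).mpr hd]
  · have hN : (ζ ^ d) ^ N = 1 := by
      rw [← zpow_natCast, ← zpow_mul, mul_comm, zpow_mul, zpow_natCast, hζ.pow_eq_one, one_zpow]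
    rw [geom_sum_eq (mt (hζ.zpow_eq_one_iff_dvd d).mp hd), hN, sub_self, zero_div]

section Unitary

variable {𝕜 ι : Type*} [RCLike 𝕜] [Fintype ι] [DecidableEq ι] {U : Matrix ι ι 𝕜}

theorem sum_norm_sq_mulVec_of_mem_unitaryGroup (hU : U ∈ Matrix.unitaryGroup ι 𝕜) (b : ι → 𝕜) :
    ∑ i, ‖(U *ᵥ b) i‖ ^ 2 = ∑ i, ‖b i‖ ^ 2 := by
  have h := ContinuousLinearMap.norm_map_of_mem_unitary
    (Unitary.map_mem (Matrix.toEuclideanCLM (n := ι) (𝕜 := 𝕜)) hU) (WithLp.toLp 2 b)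
  rw [EuclideanSpace.norm_eq, EuclideanSpace.norm_eq,
    Real.sqrt_inj (by positivity) (by positivity)] at h
  simpa using h

theorem sum_norm_mulVec_le_of_mem_unitaryGroup (hU : U ∈ Matrix.unitaryGroup ι 𝕜) (b : ι → 𝕜) :
    ∑ i, ‖(U *ᵥ b) i‖ ≤ Fintype.card ι * ‖b‖ := by
  have hsq : (∑ i, ‖(U *ᵥ b) i‖) ^ 2 ≤ (Fintype.card ι * ‖b‖) ^ 2 :=
    calc (∑ i, ‖(U *ᵥ b) i‖) ^ 2 ≤ Fintype.card ι * ∑ i, ‖(U *ᵥ b) i‖ ^ 2 :=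
          sq_sum_le_card_mul_sum_sq
      _ = Fintype.card ι * ∑ i, ‖b i‖ ^ 2 := by rw [sum_norm_sq_mulVec_of_mem_unitaryGroup hU]
      _ ≤ Fintype.card ι * ∑ _i : ι, ‖b‖ ^ 2 := by
          gcongr with i; exact norm_le_pi_norm b i
      _ = (Fintype.card ι * ‖b‖) ^ 2 := by
          rw [Finset.sum_const, Finset.card_univ, nsmul_eq_mul]; ring
  exact (pow_le_pow_iff_left₀ (by positivity) (by positivity) two_ne_zero).mp hsq

end Unitary

open Complex in
theorem norm_Fmat (N : ℕ) (j k : Fin N) : ‖Fmat N j k‖ = (Real.sqrt N)⁻¹ := by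
  have harg : -(2 * Real.pi) * I * ((j.1 : ℂ) * (k.1 : ℂ)) / (N : ℂ) =
      ((-(2 * Real.pi) * (j.1 * k.1) / N : ℝ) : ℂ) * I := by
    push_cast; ring
  rw [Fmat, harg, norm_div, norm_exp_ofReal_mul_I, norm_real,
    Real.norm_of_nonneg (Real.sqrt_nonneg _), one_div]

open Complex in
theorem star_Fmat_mul_Fmat (N : ℕ) (l m m' : Fin N) :
    star (Fmat N l m) * Fmat N l m' =
      (exp (2 * Real.pi * I / N) ^ ((m : ℤ) - m')) ^ (l : ℕ) / N := by
  have hsqrt : ((Real.sqrt N : ℝ) : ℂ) * (Real.sqrt N : ℝ) = N := by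
    rw [← ofReal_mul, Real.mul_self_sqrt N.cast_nonneg, ofReal_natCast]
  rw [Fmat, Fmat, star_div₀, star_def, ← exp_conj, conj_ofReal, div_mul_div_comm, ← exp_add,
    hsqrt, ← exp_int_mul, ← exp_nat_mul]
  congr 2
  simp only [map_div₀, map_mul, map_neg, map_natCast, conj_ofReal, conj_I, map_ofNat]
  push_cast
  ring

theorem Fmat_mem_unitaryGroup (N : ℕ) : Matrix.of (Fmat N) ∈ Matrix.unitaryGroup (Fin N) ℂ := by
  rw [Matrix.mem_unitaryGroup_iff']
  ext m m'
  have hN : N ≠ 0 := m.pos.ne'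
  simp only [Matrix.mul_apply, Matrix.star_apply, Matrix.of_apply, star_Fmat_mul_Fmat,
    ← Finset.sum_div, (Complex.isPrimitiveRoot_exp N hN).sum_zpow_pow_fin, Matrix.one_apply]
  have hdvd : (N : ℤ) ∣ (m : ℤ) - m' ↔ m = m' := by
    refine ⟨fun h => Fin.ext ?_, fun h => by simp [h]⟩
    have := Int.eq_zero_of_abs_lt_dvd h (by rw [abs_sub_lt_iff]; omega)
    omega
  simp [hdvd, apply_ite (· / (N : ℂ)), hN]

section MixedNorms

variable {J : Type*}

def mixedNormInftyOne (a : J → J → ℂ) : ℝ≥0∞ :=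
  ∑' l₂, ⨆ l₁, (‖a l₁ l₂‖₊ : ℝ≥0∞)

def mixedNormOneInftyOneInfty (b : J → J → J → J → ℂ) : ℝ≥0∞ :=
  ⨆ j₄, ∑' j₃, ⨆ j₂, ∑' j₁, (‖b j₁ j₂ j₃ j₄‖₊ : ℝ≥0∞)

def permC3 (K : J → J → J → J → ℂ) : J → J → J → J → ℂ :=
  fun x₁ x₂ x₃ x₄ => K x₂ x₃ x₁ x₄

def kernelOp (K : J → J → J → J → ℂ) (a : J → J → ℂ) : J → J → ℂ :=
  fun l₁ l₂ => ∑' m : J × J, K l₁ l₂ m.1 m.2 * a m.1 m.2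

def kernelOpNorm (K : J → J → J → J → ℂ) : ℝ≥0∞ :=
  ⨆ (a : J → J → ℂ) (_ : mixedNormInftyOne a ≤ 1), mixedNormInftyOne (kernelOp K a)

theorem kernelOpNorm_le {K : J → J → J → J → ℂ} {c : ℝ≥0∞}
    (h : ∀ a, mixedNormInftyOne (kernelOp K a) ≤ c * mixedNormInftyOne a) : kernelOpNorm K ≤ c :=
  iSup₂_le fun a ha => (h a).trans (mul_le_of_le_one_right' ha)

theorem nnnorm_sum_le_mixedNormInftyOne [Fintype J] (a : J → J → ℂ) (m₁ : J) :
    (‖∑ m₂, a m₁ m₂‖₊ : ℝ≥0∞) ≤ mixedNormInftyOne a := by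
  rw [mixedNormInftyOne, tsum_fintype]
  calc (‖∑ m₂, a m₁ m₂‖₊ : ℝ≥0∞) ≤ ∑ m₂, (‖a m₁ m₂‖₊ : ℝ≥0∞) := by
        exact_mod_cast nnnorm_sum_le Finset.univ (a m₁)
    _ ≤ ∑ m₂, ⨆ l₁, (‖a l₁ m₂‖₊ : ℝ≥0∞) :=
        Finset.sum_le_sum fun m₂ _ => le_iSup (fun l₁ => (‖a l₁ m₂‖₊ : ℝ≥0∞)) m₁

theorem kernelOp_apply_eq_mulVec [Fintype J] (U : Matrix J J ℂ) (a : J → J → ℂ) (l₁ l₂ : J) :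
    kernelOp (fun _ l₂ m₁ _ => U l₂ m₁) a l₁ l₂ = (U *ᵥ fun m₁ => ∑ m₂, a m₁ m₂) l₂ := by
  simp only [kernelOp, tsum_fintype, Fintype.sum_prod_type, Matrix.mulVec, dotProduct,
    Finset.mul_sum]

theorem mixedNormInftyOne_kernelOp_le_of_mem_unitaryGroup [Fintype J] [DecidableEq J]
    {U : Matrix J J ℂ} (hU : U ∈ Matrix.unitaryGroup J ℂ) (a : J → J → ℂ) :
    mixedNormInftyOne (kernelOp (fun _ l₂ m₁ _ => U l₂ m₁) a) ≤
      Fintype.card J * mixedNormInftyOne a := by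
  set b : J → ℂ := fun m₁ => ∑ m₂, a m₁ m₂
  have hb : (‖b‖₊ : ℝ≥0∞) ≤ mixedNormInftyOne a := by
    rw [Pi.nnnorm_def, ENNReal.coe_finset_sup]
    exact Finset.sup_le fun m₁ _ => nnnorm_sum_le_mixedNormInftyOne a m₁
  calc mixedNormInftyOne (kernelOp (fun _ l₂ m₁ _ => U l₂ m₁) a)
      ≤ ∑ l₂, (‖(U *ᵥ b) l₂‖₊ : ℝ≥0∞) := by
        rw [mixedNormInftyOne, tsum_fintype]
        exact Finset.sum_le_sum fun l₂ _ =>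
          iSup_le fun l₁ => by rw [kernelOp_apply_eq_mulVec]
    _ = ENNReal.ofReal (∑ l₂, ‖(U *ᵥ b) l₂‖) := by
        rw [ENNReal.ofReal_sum_of_nonneg fun _ _ => norm_nonneg _]
        simp only [ofReal_norm, enorm_eq_nnnorm]
    _ ≤ ENNReal.ofReal (Fintype.card J * ‖b‖) :=
        ENNReal.ofReal_le_ofReal (sum_norm_mulVec_le_of_mem_unitaryGroup hU b)
    _ = Fintype.card J * ‖b‖₊ := by
        rw [ENNReal.ofReal_mul (Nat.cast_nonneg _), ENNReal.ofReal_natCast, ofReal_norm,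
          enorm_eq_nnnorm]
    _ ≤ Fintype.card J * mixedNormInftyOne a := by gcongr

end MixedNorms

theorem mixedNormOneInftyOneInfty_permC3_Kmat (N : ℕ) :
    mixedNormOneInftyOneInfty (permC3 (Kmat N)) =
      ∑' jk : Fin N × Fin N, (‖Fmat N jk.1 jk.2‖₊ : ℝ≥0∞) := by
  rcases isEmpty_or_nonempty (Fin N) with _ | _
  · simp [mixedNormOneInftyOneInfty]
  · simp only [mixedNormOneInftyOneInfty, permC3, Kmat, iSup_const]
    exact ENNReal.tsum_prod.symm

theorem tsum_nnnorm_Fmat (N : ℕ) :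
    ∑' jk : Fin N × Fin N, (‖Fmat N jk.1 jk.2‖₊ : ℝ≥0∞) =
      ENNReal.ofReal ((N : ℝ) ^ (3 / 2 : ℝ)) := by
  have h32 : (N : ℝ) ^ (3 / 2 : ℝ) = N * N * (Real.sqrt N)⁻¹ := by
    rw [mul_assoc, ← div_eq_mul_inv, Real.div_sqrt, show (3 / 2 : ℝ) = 1 + 1 / 2 by norm_num,
      Real.rpow_add' N.cast_nonneg (by norm_num), Real.rpow_one, Real.sqrt_eq_rpow]
  simp only [← enorm_eq_nnnorm, ← ofReal_norm, norm_Fmat, tsum_fintype, Finset.sum_const,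
    Finset.card_univ, Fintype.card_prod, Fintype.card_fin, nsmul_eq_mul]
  rw [h32, ENNReal.ofReal_mul (by positivity), ENNReal.ofReal_mul (by positivity),
    ENNReal.ofReal_natCast, Nat.cast_mul]

theorem fourier_kernel_counterexample_general (N : ℕ) :
    ((⨆ j4 : Fin N, ∑' j3 : Fin N, ⨆ j2 : Fin N, ∑' j1 : Fin N,
        (‖Kmat N j2 j3 j1 j4‖₊ : ℝ≥0∞)) =
      ∑' jk : Fin N × Fin N, (‖Fmat N jk.1 jk.2‖₊ : ℝ≥0∞)) ∧
    ((⨆ j4 : Fin N, ∑' j3 : Fin N, ⨆ j2 : Fin N, ∑' j1 : Fin N,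
        (‖Kmat N j2 j3 j1 j4‖₊ : ℝ≥0∞)) =
      ENNReal.ofReal ((N : ℝ) ^ (3 / 2 : ℝ))) ∧
    (∀ a : Fin N → Fin N → ℂ,
      (∑' l2 : Fin N, ⨆ l1 : Fin N,
          (‖∑' m : Fin N × Fin N, Kmat N l1 l2 m.1 m.2 * a m.1 m.2‖₊ : ℝ≥0∞)) ≤
        (N : ℝ≥0∞) * ∑' l2 : Fin N, ⨆ l1 : Fin N, (‖a l1 l2‖₊ : ℝ≥0∞)) ∧
    ¬ ∃ C : ℝ≥0∞, C ≠ ∞ ∧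
        ∀ (J : Type) (_ : Countable J) (K : J → J → J → J → ℂ),
          (⨆ j4 : J, ∑' j3 : J, ⨆ j2 : J, ∑' j1 : J, (‖K j2 j3 j1 j4‖₊ : ℝ≥0∞)) ≤
            C * ⨆ (a : J → J → ℂ)
                (_ : (∑' l2 : J, ⨆ l1 : J, (‖a l1 l2‖₊ : ℝ≥0∞)) ≤ 1),
                ∑' l2 : J, ⨆ l1 : J,
                  (‖∑' m : J × J, K l1 l2 m.1 m.2 * a m.1 m.2‖₊ : ℝ≥0∞) := by
  have hA : ∀ M a, mixedNormInftyOne (kernelOp (Kmat M) a) ≤ M * mixedNormInftyOne a := fun M a =>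
    (mixedNormInftyOne_kernelOp_le_of_mem_unitaryGroup (Fmat_mem_unitaryGroup M) a).trans_eq
      (by rw [Fintype.card_fin])
  refine ⟨mixedNormOneInftyOneInfty_permC3_Kmat N,
    (mixedNormOneInftyOneInfty_permC3_Kmat N).trans (tsum_nnnorm_Fmat N), hA N, ?_⟩
  rintro ⟨C, hC, hK⟩
  obtain ⟨n, hn⟩ := ENNReal.exists_nat_gt hC
  have hn0 : (n : ℝ≥0∞) ^ 2 ≠ 0 := pow_ne_zero 2 (ne_bot_of_gt hn)
  -- Test the bound on the kernel of size `n²`: its norm is `(n²)^{3/2} = n³`.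
  have key : (n : ℝ≥0∞) * n ^ 2 ≤ C * n ^ 2 :=
    calc (n : ℝ≥0∞) * n ^ 2
        = mixedNormOneInftyOneInfty (permC3 (Kmat (n ^ 2))) := by
          rw [mixedNormOneInftyOneInfty_permC3_Kmat, tsum_nnnorm_Fmat, Nat.cast_pow,
            ← Real.rpow_natCast, ← Real.rpow_mul n.cast_nonneg,
            show (2 : ℕ) * (3 / 2 : ℝ) = (3 : ℕ) by norm_num, Real.rpow_natCast,
            ENNReal.ofReal_pow n.cast_nonneg, ENNReal.ofReal_natCast]
          ring
      _ ≤ C * kernelOpNorm (Kmat (n ^ 2)) := hK _ inferInstance _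
      _ ≤ C * n ^ 2 := by gcongr; exact_mod_cast kernelOpNorm_le (hA (n ^ 2))
  exact hn.not_ge ((ENNReal.mul_le_mul_iff_left hn0 (by simp)).mp key)

/-- **Sharpness of the Schur-type bound** (Remark 4.2 of the paper).
For `J = {0,…,N-1}` and the kernel `K_{λ₁,λ₂,μ₁,μ₂} = F_{λ₂,μ₁}` given by the Fourier
matrix, one has `‖K ∘ c̃₃‖_{ℓ^{1,∞,1,∞}} = ‖F‖_{ℓ¹} = N^{3/2}`, while the associated
operator `A` satisfies `‖A‖_{ℓ^{∞,1} → ℓ^{∞,1}} ≤ N`.  Consequently there is no finite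
constant `C`, independent of the kernel, with
`‖K ∘ c̃₃‖_{ℓ^{1,∞,1,∞}} ≤ C ‖A‖_{ℓ^{∞,1} → ℓ^{∞,1}}` for all kernels. -/
theorem fourier_kernel_counterexample (N : ℕ) (hN : 0 < N) :
    ((⨆ j4 : Fin N, ∑' j3 : Fin N, ⨆ j2 : Fin N, ∑' j1 : Fin N,
        (‖Kmat N j2 j3 j1 j4‖₊ : ℝ≥0∞)) =
      ∑' jk : Fin N × Fin N, (‖Fmat N jk.1 jk.2‖₊ : ℝ≥0∞)) ∧
    ((⨆ j4 : Fin N, ∑' j3 : Fin N, ⨆ j2 : Fin N, ∑' j1 : Fin N,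
        (‖Kmat N j2 j3 j1 j4‖₊ : ℝ≥0∞)) =
      ENNReal.ofReal ((N : ℝ) ^ (3 / 2 : ℝ))) ∧
    (∀ a : Fin N → Fin N → ℂ,
      (∑' l2 : Fin N, ⨆ l1 : Fin N,
          (‖∑' m : Fin N × Fin N, Kmat N l1 l2 m.1 m.2 * a m.1 m.2‖₊ : ℝ≥0∞)) ≤
        (N : ℝ≥0∞) * ∑' l2 : Fin N, ⨆ l1 : Fin N, (‖a l1 l2‖₊ : ℝ≥0∞)) ∧
    ¬ ∃ C : ℝ≥0∞, C ≠ ∞ ∧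
        ∀ (J : Type) (_ : Countable J) (K : J → J → J → J → ℂ),
          (⨆ j4 : J, ∑' j3 : J, ⨆ j2 : J, ∑' j1 : J, (‖K j2 j3 j1 j4‖₊ : ℝ≥0∞)) ≤
            C * ⨆ (a : J → J → ℂ)
                (_ : (∑' l2 : J, ⨆ l1 : J, (‖a l1 l2‖₊ : ℝ≥0∞)) ≤ 1),
                ∑' l2 : J, ⨆ l1 : J,
                  (‖∑' m : J × J, K l1 l2 m.1 m.2 * a m.1 m.2‖₊ : ℝ≥0∞) :=
  fourier_kernel_counterexample_general N

end
end
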